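/- arXiv:math/0611926 — 2 statements merged into one kernel-verified Lean document; each statement's English description precedes it below -/
import Mathlib

section
/- (Derivative of the second projected coordinate.) Let ℓ ≥ 1, let (c,d) ∈ ℝ² with c ≠ 0, take speed ϱ = c, and let (t,s) ∈ ℝ². Along the disto-line t(τ) = t + cτ, s(τ) = s + (d/f_ℓ(c))(f_ℓ(t(τ)) − f_ℓ(t)), set ρ(τ) := ρ(t(τ),s(τ)) and s̃(τ) := s(τ)/ρ(τ)^ℓ. Then at every τ₀ with ρ(τ₀) > 0, s̃ is differentiable at τ₀ and s̃′(τ₀) = −ℓ |c|^{1−ℓ} · (t(τ₀)|t(τ₀)|^{2ℓ−2} / ρ(τ₀)^{3ℓ}) · Δ_ℓ((c,d);(t,s)). -/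
open MeasureTheory Real Set

noncomputable section

/-- `f_ℓ(σ) = σ|σ|^{ℓ-1}`. -/
def fl (l : ℝ) (σ : ℝ) : ℝ := σ * |σ| ^ (l - 1)

/-- The disto-scalar product `⟨v|w⟩_ℓ`. -/
def distoDot (l : ℝ) (v w : ℝ × ℝ) : ℝ := fl l v.1 * fl l w.1 + v.2 * w.2

/-- The distorted determinant `Δ_ℓ(v;w)`. -/
def distoDet (l : ℝ) (v w : ℝ × ℝ) : ℝ := fl l v.1 * w.2 - v.2 * fl l w.1

/-- The quasihomogeneous gauge `ρ(t,s)`. -/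
def qgauge (l : ℝ) (p : ℝ × ℝ) : ℝ := (|p.1| ^ (2 * l) + p.2 ^ 2) ^ (1 / (2 * l))

/-- First coordinate of the disto-line through `(t,s)` parallel to `(c,d)` with speed `ϱ`. -/
def lineT (ϱ t : ℝ) (τ : ℝ) : ℝ := t + ϱ * τ

/-- Second coordinate of the disto-line through `(t,s)` parallel to `(c,d)` with speed `ϱ`. -/
def lineS (l c d ϱ t s : ℝ) (τ : ℝ) : ℝ := s + d / fl l c * (fl l (t + ϱ * τ) - fl l t)

/-!
`ρ^ℓ` is the Euclidean norm `r` of `(f_ℓ(t), s)`, so `s̃ = s / r`, and the quotient rule gives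
`s̃' = K (K S' - S K') / r³` with `K = f_ℓ(t(τ))`, `S = s(τ)`. Along a disto-line both `K'` and `S'`
are multiples of `f_ℓ'(t(τ)) = ℓ |t(τ)|^{ℓ-1} c`, which turns `K S' - S K'` into a multiple of the
distorted determinant, and that is constant along the line.
-/

theorem hasDerivAt_mul_of_continuousAt_zero {g : ℝ → ℝ} (hg : ContinuousAt g 0) :
    HasDerivAt (fun x => x * g x) (g 0) 0 := by
  rw [hasDerivAt_iff_tendsto_slope]
  refine (hg.tendsto.mono_left nhdsWithin_le_nhds).congr' ?_
  filter_upwards [self_mem_nhdsWithin] with x hx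
  rw [slope_def_field]
  field_simp [show x ≠ 0 from hx]
  simp

theorem HasDerivAt.div_sqrt_sq_add_sq {K S : ℝ → ℝ} {K' S' x : ℝ} (hK : HasDerivAt K K' x)
    (hS : HasDerivAt S S' x) (hpos : 0 < K x ^ 2 + S x ^ 2) :
    HasDerivAt (fun y => S y / √(K y ^ 2 + S y ^ 2))
      (K x * (K x * S' - S x * K') / √(K x ^ 2 + S x ^ 2) ^ 3) x := by
  have hr : 0 < √(K x ^ 2 + S x ^ 2) := Real.sqrt_pos.2 hpos
  refine (hS.div (((hK.fun_pow 2).fun_add (hS.fun_pow 2)).sqrt hpos.ne') hr.ne').congr_deriv ?_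
  field_simp
  rw [Real.sq_sqrt hpos.le]
  ring

theorem fl_ne_zero {c : ℝ} (hc : c ≠ 0) (l : ℝ) : fl l c ≠ 0 :=
  mul_ne_zero hc (Real.rpow_pos_of_pos (abs_pos.2 hc) _).ne'

theorem div_fl_self {c : ℝ} (hc : c ≠ 0) (l : ℝ) : c / fl l c = |c| ^ (1 - l) := by
  rw [div_eq_iff (fl_ne_zero hc l), fl, mul_left_comm, ← Real.rpow_add (abs_pos.2 hc)]
  simp

theorem fl_sq {l : ℝ} (hl : l ≠ 0) (x : ℝ) : fl l x ^ 2 = |x| ^ (2 * l) := by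
  rcases eq_or_ne x 0 with rfl | hx
  · simp [fl, Real.zero_rpow (mul_ne_zero two_ne_zero hl)]
  · rw [fl, mul_pow, ← sq_abs x, ← Real.rpow_natCast, ← Real.rpow_natCast,
      ← Real.rpow_mul (abs_nonneg x), ← Real.rpow_add (abs_pos.2 hx)]
    congr 1
    push_cast
    ring

theorem fl_mul_abs_rpow (l x : ℝ) : fl l x * |x| ^ (l - 1) = x * |x| ^ (2 * l - 2) := by
  rcases eq_or_ne x 0 with rfl | hx
  · simp [fl]
  · rw [fl, mul_assoc, ← Real.rpow_add (abs_pos.2 hx)]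
    ring_nf

theorem hasDerivAt_fl {l : ℝ} (hl : 1 ≤ l) (x : ℝ) :
    HasDerivAt (fl l) (l * |x| ^ (l - 1)) x := by
  show HasDerivAt (fun y => y * |y| ^ (l - 1)) _ x
  rcases eq_or_ne x 0 with rfl | hx
  · have hg : ContinuousAt (fun y : ℝ => |y| ^ (l - 1)) 0 :=
      (Real.continuousAt_rpow_const _ _ (Or.inr (by linarith))).comp continuous_abs.continuousAt
    refine (hasDerivAt_mul_of_continuousAt_zero hg).congr_deriv ?_
    rcases eq_or_lt_of_le hl with rfl | hl
    · simp
    · simp [Real.zero_rpow (sub_ne_zero.2 hl.ne')]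
  · have hx' : |x| ≠ 0 := abs_ne_zero.2 hx
    have habs := (hasDerivAt_abs hx).rpow_const (p := l - 1) (Or.inl hx')
    refine ((hasDerivAt_id x).mul habs).congr_deriv ?_
    rw [Real.rpow_sub_one hx' (l - 1), id, ← mul_assoc, ← mul_assoc, self_mul_sign]
    field_simp
    ring

theorem qgauge_rpow_natCast_mul {l : ℝ} (hl : l ≠ 0) (n : ℕ) (p : ℝ × ℝ) :
    qgauge l p ^ (n * l) = √(fl l p.1 ^ 2 + p.2 ^ 2) ^ n := by
  rw [qgauge, ← Real.rpow_mul (by positivity), fl_sq hl, Real.sqrt_eq_rpow,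
    ← Real.rpow_mul_natCast (by positivity)]
  congr 1
  field_simp

section DistoLine

variable {l c : ℝ} (d ϱ t s τ : ℝ)

theorem hasDerivAt_fl_lineT (hl : 1 ≤ l) :
    HasDerivAt (fun τ => fl l (lineT ϱ t τ)) (l * |lineT ϱ t τ| ^ (l - 1) * ϱ) τ := by
  have hline : HasDerivAt (lineT ϱ t) ϱ τ := by
    unfold lineT
    simpa using ((hasDerivAt_id τ).const_mul ϱ).const_add t
  exact (hasDerivAt_fl hl _).comp τ hline

theorem hasDerivAt_lineS (hl : 1 ≤ l) :
    HasDerivAt (lineS l c d ϱ t s) (d / fl l c * (l * |lineT ϱ t τ| ^ (l - 1) * ϱ)) τ :=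
  (((hasDerivAt_fl_lineT ϱ t τ hl).sub_const (fl l t)).const_mul (d / fl l c)).const_add s

theorem distoDet_lineT_lineS (hc : c ≠ 0) :
    distoDet l (c, d) (lineT ϱ t τ, lineS l c d ϱ t s τ) = distoDet l (c, d) (t, s) := by
  simp only [distoDet, lineT, lineS]
  field_simp [fl_ne_zero hc]
  ring

end DistoLine

/-- derivative of the second projected coordinate. -/
theorem hasDerivAt_projected_s (l : ℝ) (hl : 1 ≤ l) (c d : ℝ) (hc : c ≠ 0) (t s : ℝ)
    (τ₀ : ℝ) (hρ : 0 < qgauge l (lineT c t τ₀, lineS l c d c t s τ₀)) :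
    HasDerivAt (fun τ => lineS l c d c t s τ / qgauge l (lineT c t τ, lineS l c d c t s τ) ^ l)
      (-(l * |c| ^ (1 - l) *
        (lineT c t τ₀ * |lineT c t τ₀| ^ (2 * l - 2) /
          qgauge l (lineT c t τ₀, lineS l c d c t s τ₀) ^ (3 * l)) *
        distoDet l (c, d) (t, s))) τ₀ := by
  have hl0 : l ≠ 0 := by positivity
  have hnorm (τ : ℝ) : qgauge l (lineT c t τ, lineS l c d c t s τ) ^ l =
      √(fl l (lineT c t τ) ^ 2 + lineS l c d c t s τ ^ 2) := by
    simpa using qgauge_rpow_natCast_mul hl0 1 (lineT c t τ, lineS l c d c t s τ)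
  have hcube := qgauge_rpow_natCast_mul hl0 3 (lineT c t τ₀, lineS l c d c t s τ₀)
  have hpos : 0 < fl l (lineT c t τ₀) ^ 2 + lineS l c d c t s τ₀ ^ 2 :=
    Real.sqrt_pos.1 (hnorm τ₀ ▸ Real.rpow_pos_of_pos hρ l)
  simp only [hnorm]
  refine ((hasDerivAt_fl_lineT c t τ₀ hl).div_sqrt_sq_add_sq
    (hasDerivAt_lineS d c t s τ₀ hl) hpos).congr_deriv ?_
  push_cast at hcube
  rw [hcube, ← distoDet_lineT_lineS d c t s τ₀ hc, ← fl_mul_abs_rpow, ← div_fl_self hc, distoDet]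
  field_simp [fl_ne_zero hc]
  ring

end
end

section
/- (Disto-lines stay in disto-sectors.) Let ℓ ≥ 1, let (a,b), (c,d) ∈ ℝ² with c > 0, take speed ϱ = c, and let (t,s) ∈ ℝ². Along the disto-line t(τ) = t + cτ, s(τ) = s + (d/f_ℓ(c))(f_ℓ(t(τ)) − f_ℓ(t)), one has for every τ ∈ ℝ the identity Δ_ℓ((a,b);(t(τ),s(τ))) = Δ_ℓ((a,b);(t,s)) + (Δ_ℓ((a,b);(c,d))/f_ℓ(c)) · (f_ℓ(t(τ)) − f_ℓ(t)), and Δ_ℓ((t(τ),s(τ));(c,d)) = Δ_ℓ((t,s);(c,d)). Consequently, if Δ_ℓ((a,b);(t,s)) ≥ 0, Δ_ℓ((t,s);(c,d)) ≥ 0 and Δ_ℓ((a,b);(c,d)) ≥ 0, then for every τ ≥ 0 one has Δ_ℓ((a,b);(t(τ),s(τ))) ≥ 0 and Δ_ℓ((t(τ),s(τ));(c,d)) ≥ 0; that is, the curve remains for all τ ≥ 0 in the disto-sector bounded by the disto-rays through (a,b) and (c,d). -/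
open MeasureTheory Real Set

noncomputable section

lemma fl_neg (l σ : ℝ) : fl l (-σ) = - fl l σ := by
  simp [fl, abs_neg, neg_mul]

lemma fl_pos (l : ℝ) {σ : ℝ} (hσ : 0 < σ) : 0 < fl l σ :=
  mul_pos hσ (Real.rpow_pos_of_pos (abs_pos.mpr hσ.ne') _)

lemma fl_mono (l : ℝ) (hl : 1 ≤ l) : Monotone (fl l) := by
  intro x y hxy
  have key : ∀ u v : ℝ, 0 ≤ u → u ≤ v → fl l u ≤ fl l v := by
    intro u v hu huv
    have hv : 0 ≤ v := hu.trans huv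
    unfold fl
    rw [abs_of_nonneg hu, abs_of_nonneg hv]
    exact mul_le_mul huv (Real.rpow_le_rpow hu huv (by linarith))
      (Real.rpow_nonneg hu _) hv
  rcases le_or_gt 0 x with hx | hx
  · exact key x y hx hxy
  rcases le_or_gt 0 y with hy | hy
  · have h1 : fl l x ≤ 0 :=
      mul_nonpos_of_nonpos_of_nonneg hx.le (Real.rpow_nonneg (abs_nonneg x) _)
    have h2 : 0 ≤ fl l y := mul_nonneg hy (Real.rpow_nonneg (abs_nonneg y) _)
    linarith
  · have := key (-y) (-x) (by linarith) (by linarith)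
    rw [fl_neg, fl_neg] at this
    linarith

/-- disto-lines stay in disto-sectors. -/
theorem line_stays_in_sector (l : ℝ) (hl : 1 ≤ l) (a b c d : ℝ) (hc : 0 < c) (t s : ℝ) :
    (∀ τ : ℝ,
        distoDet l (a, b) (lineT c t τ, lineS l c d c t s τ)
          = distoDet l (a, b) (t, s)
              + distoDet l (a, b) (c, d) / fl l c * (fl l (lineT c t τ) - fl l t)) ∧
    (∀ τ : ℝ,
        distoDet l (lineT c t τ, lineS l c d c t s τ) (c, d)
          = distoDet l (t, s) (c, d)) ∧
    (0 ≤ distoDet l (a, b) (t, s) → 0 ≤ distoDet l (t, s) (c, d) →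
      0 ≤ distoDet l (a, b) (c, d) →
      ∀ τ : ℝ, 0 ≤ τ →
        0 ≤ distoDet l (a, b) (lineT c t τ, lineS l c d c t s τ) ∧
        0 ≤ distoDet l (lineT c t τ, lineS l c d c t s τ) (c, d)) := by
  have hfc : 0 < fl l c := fl_pos l hc
  have hfc' : fl l c ≠ 0 := hfc.ne'
  have h1 : ∀ τ : ℝ,
      distoDet l (a, b) (lineT c t τ, lineS l c d c t s τ)
        = distoDet l (a, b) (t, s)
            + distoDet l (a, b) (c, d) / fl l c * (fl l (lineT c t τ) - fl l t) := by
    intro τ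
    simp only [distoDet, lineT, lineS]
    field_simp
    ring
  have h2 : ∀ τ : ℝ,
      distoDet l (lineT c t τ, lineS l c d c t s τ) (c, d)
        = distoDet l (t, s) (c, d) := by
    intro τ
    simp only [distoDet, lineT, lineS]
    field_simp
    ring
  refine ⟨h1, h2, ?_⟩
  intro hab hcd habcd τ hτ
  constructor
  · rw [h1 τ]
    have hmono : fl l t ≤ fl l (lineT c t τ) :=
      fl_mono l hl (by unfold lineT; nlinarith)
    have : 0 ≤ distoDet l (a, b) (c, d) / fl l c * (fl l (lineT c t τ) - fl l t) :=
      mul_nonneg (div_nonneg habcd hfc.le) (by linarith)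
    linarith
  · rw [h2 τ]
    exact hcd

end
end
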